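/- Under the SUCAG setup, for every k ≥ 1 the gradient-approximation error satisfies ‖e^k‖ ≤ L̄_H ( 2‖θ^k − θ*‖² + ‖θ^{τ_{i_k}^{k−1}} − θ*‖² + (1/N)∑_{i≠i_k} ‖θ^{τ_i^{k−1}} − θ*‖² ). Consequently, if the delay assumption (A4) k − τ_i^{k−1} ≤ m_k holds for all i, then ‖e^k‖ ≤ 4 L̄_H max_{(k−m_k)_+ ≤ ℓ ≤ k} ‖θ^ℓ − θ*‖², where (x)_+ := max{0,x}. -/

import Mathlib

open scoped BigOperators RealInnerProductSpace

/-!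
Write `r_i := ∇f_i(θ^k) - g_i^k(θ^k)` for the error of the linearization of `∇f_i` at
`θ^{τ_i^{k-1}}`. Since `∇F` is the average of the `∇f_i`, the error is `e^k = r_{i_k} - (1/N) ∑_i r_i`,
and a Lipschitz Hessian bounds each `‖r_i‖` by `(L_{H,i}/2) ‖θ^k - θ^{τ_i^{k-1}}‖²`, hence by
`L̄_H (‖θ^k - θ*‖² + ‖θ^{τ_i^{k-1}} - θ*‖²)`. Summing gives the first bound; under (A4) every
iterate occurring in it lies in the window `[(k - m_k)_+, k]`, which gives the second.
-/

open Finset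

theorem norm_sub_add_fderiv_le_of_lipschitz_fderiv {E F : Type*} [NormedAddCommGroup E]
    [NormedSpace ℝ E] [NormedAddCommGroup F] [NormedSpace ℝ F] {G : E → F} {C : ℝ}
    (hG : Differentiable ℝ G) (hC : ∀ a b, ‖fderiv ℝ G a - fderiv ℝ G b‖ ≤ C * ‖a - b‖)
    (x y : E) : ‖G x - (G y + fderiv ℝ G y (x - y))‖ ≤ C / 2 * ‖x - y‖ ^ 2 := by
  set v := x - y
  -- compare `t ↦ G (y + t v) - G y - t G'(y) v` with the parabola `C t² ‖v‖² / 2` on `[0, 1]`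
  have hderiv : ∀ t : ℝ, HasDerivAt (fun s : ℝ => G (y + s • v) - (G y + s • fderiv ℝ G y v))
      (fderiv ℝ G (y + t • v) v - fderiv ℝ G y v) t := fun t => by
    have hline : HasDerivAt (fun s : ℝ => y + s • v) v t := by
      simpa using ((hasDerivAt_id t).smul_const v).const_add y
    exact ((hG _).hasFDerivAt.comp_hasDerivAt t hline).sub
      (by simpa using ((hasDerivAt_id t).smul_const (fderiv ℝ G y v)).const_add (G y))
  have hbound := image_norm_le_of_norm_deriv_right_le_deriv_boundary (a := 0) (b := 1)
    (B := fun t => C / 2 * t ^ 2 * ‖v‖ ^ 2) (B' := fun t => C * t * ‖v‖ ^ 2)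
    (fun t _ => (hderiv t).continuousAt.continuousWithinAt)
    (fun t _ => (hderiv t).hasDerivWithinAt) (by simp)
    (fun t => (((hasDerivAt_pow 2 t).const_mul (C / 2)).mul_const (‖v‖ ^ 2)).congr_deriv
      (by push_cast; ring))
    (fun t ht => by
      calc ‖fderiv ℝ G (y + t • v) v - fderiv ℝ G y v‖
          ≤ ‖fderiv ℝ G (y + t • v) - fderiv ℝ G y‖ * ‖v‖ := by
            rw [← sub_apply]; exact ContinuousLinearMap.le_opNorm _ _
        _ ≤ C * (t * ‖v‖) * ‖v‖ := by
            gcongr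
            simpa [norm_smul, abs_of_nonneg ht.1] using hC (y + t • v) y
        _ = C * t * ‖v‖ ^ 2 := by ring)
    (Set.right_mem_Icc.2 zero_le_one)
  simpa [v] using hbound

theorem norm_sub_sq_le_two_mul_add {E : Type*} [SeminormedAddCommGroup E] (x y p : E) :
    ‖x - y‖ ^ 2 ≤ 2 * ‖x - p‖ ^ 2 + 2 * ‖y - p‖ ^ 2 := by
  have h := norm_sub_le_norm_sub_add_norm_sub x p y
  rw [norm_sub_rev p y] at h
  nlinarith [norm_nonneg (x - y), sq_nonneg (‖x - p‖ - ‖y - p‖)]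

theorem norm_sub_add_fderiv_le_mul_norm_sub_sq_add_norm_sub_sq {E F : Type*} [NormedAddCommGroup E]
    [NormedSpace ℝ E] [NormedAddCommGroup F] [NormedSpace ℝ F] {G : E → F} {C : ℝ} (hC₀ : 0 ≤ C)
    (hG : Differentiable ℝ G) (hC : ∀ a b, ‖fderiv ℝ G a - fderiv ℝ G b‖ ≤ C * ‖a - b‖)
    (x y p : E) : ‖G x - (G y + fderiv ℝ G y (x - y))‖ ≤ C * (‖x - p‖ ^ 2 + ‖y - p‖ ^ 2) :=
  calc ‖G x - (G y + fderiv ℝ G y (x - y))‖ ≤ C / 2 * ‖x - y‖ ^ 2 :=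
        norm_sub_add_fderiv_le_of_lipschitz_fderiv hG hC x y
    _ ≤ C / 2 * (2 * ‖x - p‖ ^ 2 + 2 * ‖y - p‖ ^ 2) := by
        gcongr; exact norm_sub_sq_le_two_mul_add x y p
    _ = C * (‖x - p‖ ^ 2 + ‖y - p‖ ^ 2) := by ring

theorem ContDiff.differentiable_gradient {E : Type*} [NormedAddCommGroup E]
    [InnerProductSpace ℝ E] [CompleteSpace E] {f : E → ℝ} (hf : ContDiff ℝ 2 f) :
    Differentiable ℝ (gradient f) :=
  ((InnerProductSpace.toDual ℝ E).symm.toContinuousLinearEquiv.contDiff.comp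
    (hf.fderiv_right (m := 1) (by norm_num))).differentiable one_ne_zero

theorem gradient_const_mul_sum {ι E : Type*} [NormedAddCommGroup E] [InnerProductSpace ℝ E]
    [CompleteSpace E] {s : Finset ι} {f : ι → E → ℝ} {x : E}
    (hf : ∀ i ∈ s, DifferentiableAt ℝ (f i) x) (c : ℝ) :
    gradient (fun y => c * ∑ i ∈ s, f i y) x = c • ∑ i ∈ s, gradient (f i) x := by
  have h : HasFDerivAt (fun y => c * ∑ i ∈ s, f i y) (c • ∑ i ∈ s, fderiv ℝ (f i) x) x :=
    (HasFDerivAt.fun_sum fun i hi => (hf i hi).hasFDerivAt).const_mul c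
  simp [gradient, h.fderiv, map_sum]

section Average

variable {ι : Type*} [Fintype ι] [DecidableEq ι]

theorem inv_card_mul_sum_erase_le (j : ι) {b : ι → ℝ} {M : ℝ} (hM : 0 ≤ M)
    (hb : ∀ i ∈ univ.erase j, b i ≤ M) :
    (Fintype.card ι : ℝ)⁻¹ * ∑ i ∈ univ.erase j, b i ≤ M := by
  have hcard : (0 : ℝ) < Fintype.card ι := by exact_mod_cast Fintype.card_pos_iff.2 ⟨j⟩
  rw [inv_mul_le_iff₀ hcard]
  calc ∑ i ∈ univ.erase j, b i ≤ #(univ.erase j) • M := sum_le_card_nsmul _ _ _ hb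
    _ ≤ Fintype.card ι * M := by
        rw [nsmul_eq_mul, card_erase_of_mem (mem_univ j), card_univ]
        gcongr
        exact_mod_cast Nat.sub_le _ _

theorem norm_sub_inv_card_smul_sum_le {E : Type*} [SeminormedAddCommGroup E] [NormedSpace ℝ E]
    (r : ι → E) (j : ι) :
    ‖r j - (Fintype.card ι : ℝ)⁻¹ • ∑ i, r i‖
      ≤ ‖r j‖ + (Fintype.card ι : ℝ)⁻¹ * ∑ i ∈ univ.erase j, ‖r i‖ := by
  set c := (Fintype.card ι : ℝ)⁻¹
  have hc0 : 0 ≤ c := by positivity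
  have hc1 : c ≤ 1 := inv_le_one_of_one_le₀ (by exact_mod_cast Fintype.card_pos_iff.2 ⟨j⟩)
  have hsplit : r j - c • ∑ i, r i = (1 - c) • r j - c • ∑ i ∈ univ.erase j, r i := by
    rw [← add_sum_erase _ r (mem_univ j)]; module
  calc ‖r j - c • ∑ i, r i‖
      ≤ (1 - c) * ‖r j‖ + c * ‖∑ i ∈ univ.erase j, r i‖ := by
        rw [hsplit]
        refine (norm_sub_le _ _).trans_eq ?_
        rw [norm_smul, norm_smul, Real.norm_of_nonneg (sub_nonneg.2 hc1), Real.norm_of_nonneg hc0]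
    _ ≤ ‖r j‖ + c * ∑ i ∈ univ.erase j, ‖r i‖ := by
        gcongr
        · nlinarith [norm_nonneg (r j)]
        · exact norm_sum_le _ _

theorem norm_sub_inv_card_smul_sum_le_of_norm_le {E : Type*} [SeminormedAddCommGroup E]
    [NormedSpace ℝ E] {r : ι → E} {L a : ℝ} {b : ι → ℝ} (hL : 0 ≤ L) (ha : 0 ≤ a)
    (hr : ∀ i, ‖r i‖ ≤ L * (a + b i)) (j : ι) :
    ‖r j - (Fintype.card ι : ℝ)⁻¹ • ∑ i, r i‖
      ≤ L * (2 * a + b j + (Fintype.card ι : ℝ)⁻¹ * ∑ i ∈ univ.erase j, b i) := by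
  set c := (Fintype.card ι : ℝ)⁻¹
  have hLa : c * ∑ _i ∈ univ.erase j, L * a ≤ L * a :=
    inv_card_mul_sum_erase_le j (mul_nonneg hL ha) fun _ _ => le_rfl
  calc ‖r j - c • ∑ i, r i‖ ≤ ‖r j‖ + c * ∑ i ∈ univ.erase j, ‖r i‖ :=
        norm_sub_inv_card_smul_sum_le r j
    _ ≤ L * (a + b j) + c * ∑ i ∈ univ.erase j, (L * a + L * b i) := by
        gcongr with i
        · exact hr j
        · exact (hr i).trans_eq (mul_add _ _ _)
    _ = L * (a + b j) + c * ∑ _i ∈ univ.erase j, L * a + L * (c * ∑ i ∈ univ.erase j, b i) := by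
        rw [sum_add_distrib, ← mul_sum _ b L]; ring
    _ ≤ L * (2 * a + b j + c * ∑ i ∈ univ.erase j, b i) := by linarith

theorem two_mul_add_add_inv_card_mul_sum_erase_le (j : ι) {a M : ℝ} {b : ι → ℝ} (hM : 0 ≤ M)
    (ha : a ≤ M) (hb : ∀ i, b i ≤ M) :
    2 * a + b j + (Fintype.card ι : ℝ)⁻¹ * ∑ i ∈ univ.erase j, b i ≤ 4 * M := by
  linarith [hb j, inv_card_mul_sum_erase_le j hM fun i _ => hb i]

end Average

/-- bound of the SUCAG gradient-approximation error `e^k` in terms of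
distances to the optimum, and its consequence under the delay assumption (A4). -/
theorem sucag_error_bound_two
    (d N : ℕ)
    -- the component functions and Assumption A1
    (f : Fin N → EuclideanSpace ℝ (Fin d) → ℝ)
    (hsmooth : ∀ i, ContDiff ℝ 2 (f i))
    (LH : Fin N → ℝ) (hLHpos : ∀ i, 0 < LH i)
    (hLH : ∀ i x y, ‖fderiv ℝ (gradient (f i)) x - fderiv ℝ (gradient (f i)) y‖
      ≤ LH i * ‖x - y‖)
    (LbarH : ℝ) (hLbarH : IsGreatest (Set.range LH) LbarH)
    -- the sum function, Assumptions A2 and A3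
    (F : EuclideanSpace ℝ (Fin d) → ℝ)
    (hF : F = fun x => (N : ℝ)⁻¹ * ∑ i, f i x)
    (θstar : EuclideanSpace ℝ (Fin d))
    -- the SUCAG iterates
    (idx : ℕ → Fin N)
    (τ : ℕ → Fin N → ℕ) (hτ : ∀ k, 1 ≤ k → ∀ i, τ k i < k)
    (θ : ℕ → EuclideanSpace ℝ (Fin d))
    (gA : Fin N → ℕ → EuclideanSpace ℝ (Fin d) → EuclideanSpace ℝ (Fin d))
    (hgA : ∀ i k x, gA i k x = gradient (f i) (θ (τ k i))
      + (fderiv ℝ (gradient (f i)) (θ (τ k i))) (x - θ (τ k i)))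
    (g : ℕ → EuclideanSpace ℝ (Fin d))
    (hg : ∀ k, g k = (gradient (f (idx k)) (θ k) - gA (idx k) k (θ k))
      + (N : ℝ)⁻¹ • ∑ i, gA i k (θ k))
    -- the gradient-approximation error
    (e : ℕ → EuclideanSpace ℝ (Fin d))
    (he : ∀ k, e k = g k - gradient F (θ k)) :
    -- first bound
    (∀ k, 1 ≤ k →
      ‖e k‖ ≤ LbarH * (2 * ‖θ k - θstar‖ ^ 2 + ‖θ (τ k (idx k)) - θstar‖ ^ 2
        + (N : ℝ)⁻¹ * ∑ i ∈ Finset.univ.erase (idx k), ‖θ (τ k i) - θstar‖ ^ 2))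
    ∧
    -- second bound, under the delay assumption (A4)
    (∀ m : ℕ → ℝ, ∀ hm1 : 1 ≤ m 1, ∀ hmono : (∀ j l : ℕ, 1 ≤ j → j ≤ l → m j ≤ m l),
      (∀ k : ℕ, 1 ≤ k → ∀ i, (k : ℝ) - (τ k i : ℝ) ≤ m k) →
      ∀ k : ℕ, ∀ hk : 1 ≤ k,
        ‖e k‖ ≤ 4 * LbarH *
          (Finset.Icc (⌈(k : ℝ) - m k⌉₊) k).sup'
            (by
              refine Finset.nonempty_Icc.mpr (Nat.ceil_le.mpr ?_)
              have h1 : (1 : ℝ) ≤ m k := le_trans hm1 (hmono 1 k le_rfl hk)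
              have h2 : (0 : ℝ) ≤ k := Nat.cast_nonneg k
              linarith)
            (fun ℓ => ‖θ ℓ - θstar‖ ^ 2)) := by
  have hLbar : 0 ≤ LbarH := by
    obtain ⟨i, rfl⟩ := hLbarH.1
    exact (hLHpos i).le
  set r := fun k i => gradient (f i) (θ k) - gA i k (θ k)
  have herr : ∀ k, e k = r k (idx k) - (N : ℝ)⁻¹ • ∑ i, r k i := fun k => by
    rw [he, hg, hF, gradient_const_mul_sum fun i _ => ((hsmooth i).differentiable two_ne_zero) _]
    simp only [r, sum_sub_distrib, smul_sub]
    abel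
  have hres : ∀ k i, ‖r k i‖ ≤ LbarH * (‖θ k - θstar‖ ^ 2 + ‖θ (τ k i) - θstar‖ ^ 2) :=
    fun k i => by
      simp only [r, hgA]
      refine (norm_sub_add_fderiv_le_mul_norm_sub_sq_add_norm_sub_sq (hLHpos i).le
        (hsmooth i).differentiable_gradient (hLH i) _ _ θstar).trans ?_
      gcongr
      exact hLbarH.2 ⟨i, rfl⟩
  have hfirst : ∀ k, 1 ≤ k → ‖e k‖ ≤ LbarH * (2 * ‖θ k - θstar‖ ^ 2
      + ‖θ (τ k (idx k)) - θstar‖ ^ 2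
      + (N : ℝ)⁻¹ * ∑ i ∈ Finset.univ.erase (idx k), ‖θ (τ k i) - θstar‖ ^ 2) := fun k _ => by
    simpa only [herr, Fintype.card_fin] using
      norm_sub_inv_card_smul_sum_le_of_norm_le hLbar (sq_nonneg _) (hres k) (idx k)
  refine ⟨hfirst, fun m hm1 hmono hA4 k hk => (hfirst k hk).trans ?_⟩
  set W := Finset.Icc ⌈(k : ℝ) - m k⌉₊ k
  have hk_mem : k ∈ W :=
    mem_Icc.2 ⟨Nat.ceil_le.2 (by linarith [hm1.trans (hmono 1 k le_rfl hk)]), le_rfl⟩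
  have hτ_mem : ∀ i, τ k i ∈ W := fun i =>
    mem_Icc.2 ⟨Nat.ceil_le.2 (by linarith [hA4 k hk i]), (hτ k hk i).le⟩
  have hwin : ∀ ℓ ∈ W, ‖θ ℓ - θstar‖ ^ 2 ≤ W.sup' ⟨k, hk_mem⟩ (fun ℓ => ‖θ ℓ - θstar‖ ^ 2) :=
    fun ℓ hℓ => le_sup' (fun ℓ => ‖θ ℓ - θstar‖ ^ 2) hℓ
  rw [mul_comm 4 LbarH, mul_assoc]
  gcongr
  simpa only [Fintype.card_fin] using two_mul_add_add_inv_card_mul_sum_erase_le (idx k)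
    ((sq_nonneg _).trans (hwin k hk_mem)) (hwin k hk_mem) fun i => hwin _ (hτ_mem i)
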